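/- Let 𝒴 ⊆ ℝ be measurable, Γ ⊆ ℝ, k_0 ≥ 1, and let φ : 𝒴 × Γ → (0, ∞) be a kernel such that each φ(·, γ) is a probability density, satisfying (A1) for every η > 0 there is δ > 0 such that |φ(y, γ) − φ(y, γ')| < η for all y whenever |γ − γ'| < δ, and (A2) φ is bounded above. Let f_0 = Σ_{h=1}^{k_0} p_{0h} φ(·, γ_{0h}) be a probability density with p_0 in the simplex and γ_0 ∈ Γ^{k_0}, let D_0 ⊆ Γ be a compact set containing γ_{01}, …, γ_{0k_0} in its interior, and assume (A3) ∫ f_0(y) |log sup_{γ ∈ D_0} φ(y, γ) − log inf_{γ ∈ D_0} φ(y, γ)| dy < ∞. Then for every ε > 0 there exists δ > 0 such that for every θ = (p, γ) with max_h |p_h − p_{0h}| ≤ δ, max_h |γ_h − γ_{0h}| ≤ δ, and γ_h ∈ D_0 for all h, one has ∫ f_0(y) log(f_0(y) / f_θ(y)) dy < ε, where f_θ = Σ_{h=1}^{k_0} p_h φ(·, γ_h). -/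

import Mathlib

open MeasureTheory Set

/-! The integrand `f₀ log (f₀ / f_θ)` depends continuously on `θ` at every point `y`, and as long as
the weights lie in the simplex and the locations in `D₀`, both `f₀ y` and `f_θ y` are convex
combinations of values of `φ y` on `D₀`, hence lie between `inf_{D₀} φ y` and `sup_{D₀} φ y`. The
integrand is therefore dominated by the envelope of A3, and dominated convergence makes
`θ ↦ KL(f₀, f_θ)` continuous at `θ₀`, where it vanishes. -/

lemma IsCompact.sInf_image_pos {X : Type*} [TopologicalSpace X] {g : X → ℝ} {K : Set X}
    (hK : IsCompact K) (hne : K.Nonempty) (hg : ContinuousOn g K) (hpos : ∀ x ∈ K, 0 < g x) :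
    0 < sInf (g '' K) := by
  obtain ⟨x, hx, hgx⟩ := (hK.image_of_continuousOn hg).sInf_mem (hne.image g)
  exact hgx ▸ hpos x hx

lemma IsCompact.mem_Icc_sInf_sSup_image {X : Type*} [TopologicalSpace X] {g : X → ℝ}
    {K : Set X} (hK : IsCompact K) (hg : ContinuousOn g K) {x : X} (hx : x ∈ K) :
    g x ∈ Icc (sInf (g '' K)) (sSup (g '' K)) :=
  have hc := hK.image_of_continuousOn hg
  ⟨csInf_le hc.bddBelow (mem_image_of_mem g hx), le_csSup hc.bddAbove (mem_image_of_mem g hx)⟩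

lemma abs_log_div_le_log_sub_log {a b m M : ℝ} (hm : 0 < m) (ha : a ∈ Icc m M)
    (hb : b ∈ Icc m M) : |Real.log (a / b)| ≤ Real.log M - Real.log m := by
  have ha₀ : 0 < a := hm.trans_le ha.1
  have hb₀ : 0 < b := hm.trans_le hb.1
  have := Real.log_le_log hm ha.1
  have := Real.log_le_log hm hb.1
  have := Real.log_le_log ha₀ ha.2
  have := Real.log_le_log hb₀ hb.2
  rw [Real.log_div ha₀.ne' hb₀.ne', abs_sub_le_iff]
  constructor <;> linarith

section Mixture

variable {α T : Type*} {k : ℕ}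

def mixDensity (φ : α → T → ℝ) (θ : (Fin k → ℝ) × (Fin k → T)) (y : α) : ℝ :=
  ∑ i, θ.1 i * φ y (θ.2 i)

def mixtureParams (k : ℕ) (D : Set T) : Set ((Fin k → ℝ) × (Fin k → T)) :=
  {θ | (∀ i, 0 ≤ θ.1 i) ∧ ∑ i, θ.1 i = 1 ∧ ∀ i, θ.2 i ∈ D}

variable {φ : α → T → ℝ} {D : Set T} {θ₀ θ : (Fin k → ℝ) × (Fin k → T)}

lemma nonempty_of_mem_mixtureParams (hθ : θ ∈ mixtureParams k D) : D.Nonempty := by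
  obtain ⟨i, -⟩ := Finset.exists_ne_zero_of_sum_ne_zero (hθ.2.1.trans_ne one_ne_zero)
  exact ⟨θ.2 i, hθ.2.2 i⟩

lemma mixDensity_mem_of_convex {s : Set ℝ} {y : α} (hs : Convex ℝ s)
    (hθ : θ ∈ mixtureParams k D) (hφ : ∀ γ ∈ D, φ y γ ∈ s) : mixDensity φ θ y ∈ s := by
  simpa only [mixDensity, smul_eq_mul] using
    hs.sum_mem (fun i _ => hθ.1 i) hθ.2.1 fun i _ => hφ _ (hθ.2.2 i)

lemma mixDensity_pos {y : α} (hθ : θ ∈ mixtureParams k D) (hpos : ∀ γ ∈ D, 0 < φ y γ) :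
    0 < mixDensity φ θ y :=
  mixDensity_mem_of_convex (convex_Ioi 0) hθ hpos

lemma aemeasurable_mixDensity [MeasurableSpace α] {μ : Measure α}
    (hφ : ∀ γ ∈ D, AEMeasurable (fun y => φ y γ) μ) (hθ : ∀ i, θ.2 i ∈ D) :
    AEMeasurable (mixDensity φ θ) μ :=
  Finset.aemeasurable_fun_sum _ fun i _ => (hφ _ (hθ i)).const_mul _

variable [TopologicalSpace T]

lemma continuousOn_mixDensity {y : α} (hφ : ContinuousOn (φ y) D) :
    ContinuousOn (fun θ => mixDensity φ θ y) {θ : (Fin k → ℝ) × (Fin k → T) | ∀ i, θ.2 i ∈ D} :=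
  continuousOn_finsetSum _ fun i _ =>
    ((continuous_apply i).comp continuous_fst).continuousOn.mul
      (hφ.comp ((continuous_apply i).comp continuous_snd).continuousOn fun _ hθ => hθ i)

lemma abs_log_div_mixDensity_le {y : α} (hD : IsCompact D) (hcont : ContinuousOn (φ y) D)
    (hpos : ∀ γ ∈ D, 0 < φ y γ) (hθ₀ : θ₀ ∈ mixtureParams k D) (hθ : θ ∈ mixtureParams k D) :
    |Real.log (mixDensity φ θ₀ y / mixDensity φ θ y)| ≤
      |Real.log (sSup (φ y '' D)) - Real.log (sInf (φ y '' D))| := by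
  have hm := hD.sInf_image_pos (nonempty_of_mem_mixtureParams hθ₀) hcont hpos
  have hIcc : ∀ γ ∈ D, φ y γ ∈ Icc (sInf (φ y '' D)) (sSup (φ y '' D)) := fun _ =>
    hD.mem_Icc_sInf_sSup_image hcont
  exact (abs_log_div_le_log_sub_log hm (mixDensity_mem_of_convex (convex_Icc _ _) hθ₀ hIcc)
    (mixDensity_mem_of_convex (convex_Icc _ _) hθ hIcc)).trans (le_abs_self _)

lemma continuousWithinAt_mul_log_div_mixDensity {y : α} (hcont : ContinuousOn (φ y) D)
    (hpos : ∀ γ ∈ D, 0 < φ y γ) (hθ₀ : θ₀ ∈ mixtureParams k D) :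
    ContinuousWithinAt
      (fun θ => mixDensity φ θ₀ y * Real.log (mixDensity φ θ₀ y / mixDensity φ θ y))
      (mixtureParams k D) θ₀ := by
  have hsub : mixtureParams k D ⊆ {θ | ∀ i, θ.2 i ∈ D} := fun _ hθ => hθ.2.2
  have hf := ((continuousOn_mixDensity hcont).continuousWithinAt hθ₀.2.2).mono hsub
  have hf₀ := (mixDensity_pos hθ₀ hpos).ne'
  exact continuousWithinAt_const.mul
    ((continuousWithinAt_const.div hf hf₀).log (div_ne_zero hf₀ hf₀))

theorem continuousWithinAt_integral_mul_log_div_mixDensity [FirstCountableTopology T]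
    [MeasurableSpace α] {μ : Measure α}
    (hD : IsCompact D) (hmeas : ∀ γ ∈ D, AEMeasurable (fun y => φ y γ) μ)
    (hcont : ∀ᵐ y ∂μ, ContinuousOn (φ y) D) (hpos : ∀ᵐ y ∂μ, ∀ γ ∈ D, 0 < φ y γ)
    (henv : Integrable (fun y => mixDensity φ θ₀ y *
      |Real.log (sSup (φ y '' D)) - Real.log (sInf (φ y '' D))|) μ)
    (hθ₀ : θ₀ ∈ mixtureParams k D) :
    ContinuousWithinAt
      (fun θ => ∫ y, mixDensity φ θ₀ y * Real.log (mixDensity φ θ₀ y / mixDensity φ θ y) ∂μ)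
      (mixtureParams k D) θ₀ := by
  have hf₀ := aemeasurable_mixDensity hmeas hθ₀.2.2
  refine continuousWithinAt_of_dominated ?_ ?_ henv ?_
  · filter_upwards [self_mem_nhdsWithin] with θ hθ
    exact (hf₀.mul (Real.measurable_log.comp_aemeasurable
      (hf₀.div (aemeasurable_mixDensity hmeas hθ.2.2)))).aestronglyMeasurable
  · filter_upwards [self_mem_nhdsWithin] with θ hθ
    filter_upwards [hcont, hpos] with y hcy hpy
    have hf₀y := mixDensity_pos hθ₀ hpy
    rw [Real.norm_eq_abs, abs_mul, abs_of_pos hf₀y]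
    exact mul_le_mul_of_nonneg_left (abs_log_div_mixDensity_le hD hcy hpy hθ₀ hθ) hf₀y.le
  · filter_upwards [hcont, hpos] with y hcy hpy
    exact continuousWithinAt_mul_log_div_mixDensity hcy hpy hθ₀

end Mixture

theorem stmt_16_general (𝒴 : Set ℝ) (h𝒴 : MeasurableSet 𝒴) (Γs : Set ℝ)
    (k₀ : ℕ) (φ : ℝ → ℝ → ℝ)
    (hφpos : ∀ y ∈ 𝒴, ∀ γ ∈ Γs, 0 < φ y γ)
    (hφdens : ∀ γ ∈ Γs, (∫ y in 𝒴, φ y γ) = 1)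
    -- condition A1
    (hA1 : ∀ η : ℝ, 0 < η → ∃ δ : ℝ, 0 < δ ∧ ∀ y ∈ 𝒴, ∀ γ ∈ Γs, ∀ γ' ∈ Γs,
      |γ - γ'| < δ → |φ y γ - φ y γ'| < η)
    (p₀ : Fin k₀ → ℝ) (hp₀nn : ∀ i, 0 ≤ p₀ i) (hp₀sum : ∑ i, p₀ i = 1)
    (γ₀ : Fin k₀ → ℝ)
    (D₀ : Set ℝ) (hD₀c : IsCompact D₀) (hD₀s : D₀ ⊆ Γs)
    (hD₀i : ∀ i, γ₀ i ∈ interior D₀)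
    -- condition A3
    (hA3 : IntegrableOn (fun y => (∑ i, p₀ i * φ y (γ₀ i)) *
        |Real.log (sSup ((fun γ => φ y γ) '' D₀)) -
          Real.log (sInf ((fun γ => φ y γ) '' D₀))|) 𝒴) :
    ∀ ε : ℝ, 0 < ε → ∃ δ : ℝ, 0 < δ ∧
      ∀ (p : Fin k₀ → ℝ) (γ : Fin k₀ → ℝ),
        (∀ i, 0 ≤ p i) → (∑ i, p i) = 1 →
        (∀ i, |p i - p₀ i| ≤ δ) → (∀ i, |γ i - γ₀ i| ≤ δ) →
        (∀ i, γ i ∈ D₀) →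
        (∫ y in 𝒴, (∑ i, p₀ i * φ y (γ₀ i)) *
          Real.log ((∑ i, p₀ i * φ y (γ₀ i)) /
            (∑ i, p i * φ y (γ i)))) < ε := by
  intro ε hε
  have hθ₀ : (p₀, γ₀) ∈ mixtureParams k₀ D₀ :=
    ⟨hp₀nn, hp₀sum, fun i => interior_subset (hD₀i i)⟩
  have hmeas (γ) (hγ : γ ∈ D₀) : AEMeasurable (fun y => φ y γ) (volume.restrict 𝒴) :=
    (Integrable.of_integral_ne_zero ((hφdens γ (hD₀s hγ)).trans_ne one_ne_zero)).aemeasurable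
  have hcont (y) (hy : y ∈ 𝒴) : ContinuousOn (φ y) D₀ :=
    (Metric.uniformContinuousOn_iff.2 fun η hη =>
      let ⟨δ, hδ, hφδ⟩ := hA1 η hη
      ⟨δ, hδ, hφδ y hy⟩).continuousOn.mono hD₀s
  have hKL := continuousWithinAt_integral_mul_log_div_mixDensity (θ₀ := (p₀, γ₀)) hD₀c hmeas
    (ae_restrict_of_forall_mem h𝒴 hcont)
    (ae_restrict_of_forall_mem h𝒴 fun y hy γ hγ => hφpos y hy γ (hD₀s hγ)) hA3 hθ₀
  obtain ⟨δ, hδ, hKLδ⟩ := Metric.continuousWithinAt_iff.1 hKL ε hε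
  refine ⟨δ / 2, half_pos hδ, fun p γ hp hpsum hpδ hγδ hγD => ?_⟩
  have hdist : dist (p, γ) (p₀, γ₀) < δ := by
    rw [Prod.dist_eq, max_lt_iff]
    constructor <;> refine lt_of_le_of_lt ((dist_pi_le_iff (half_pos hδ).le).2 fun i => ?_)
      (half_lt_self hδ)
    exacts [hpδ i, hγδ i]
  have hKL₀ : ∀ x : ℝ, x * Real.log (x / x) = 0 := fun x => by
    rcases eq_or_ne x 0 with hx | hx <;> simp [hx]
  simpa only [mixDensity, hKL₀, integral_zero, Real.dist_eq, sub_zero] using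
    (le_abs_self _).trans_lt (hKLδ ⟨hp, hpsum, hγD⟩ hdist)

/-- continuity of the Kullback–Leibler divergence in the
mixture parameters: under A1, A2 and the integrable log-envelope condition
A3 over a compact set `D₀`, for every `ε > 0` there is `δ > 0` such that
`KL(f₀, f_θ) < ε` whenever the parameters `θ = (p, γ)` are within `δ` of
`θ₀ = (p₀, γ₀)` (with locations in `D₀`). -/
theorem stmt_16 (𝒴 : Set ℝ) (h𝒴 : MeasurableSet 𝒴) (Γs : Set ℝ)
    (k₀ : ℕ) (hk₀ : 1 ≤ k₀) (φ : ℝ → ℝ → ℝ)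
    (hφpos : ∀ y ∈ 𝒴, ∀ γ ∈ Γs, 0 < φ y γ)
    (hφdens : ∀ γ ∈ Γs, (∫ y in 𝒴, φ y γ) = 1)
    -- condition A1
    (hA1 : ∀ η : ℝ, 0 < η → ∃ δ : ℝ, 0 < δ ∧ ∀ y ∈ 𝒴, ∀ γ ∈ Γs, ∀ γ' ∈ Γs,
      |γ - γ'| < δ → |φ y γ - φ y γ'| < η)
    -- condition A2
    (hA2 : ∃ Cb : ℝ, ∀ y ∈ 𝒴, ∀ γ ∈ Γs, φ y γ ≤ Cb)
    (p₀ : Fin k₀ → ℝ) (hp₀nn : ∀ i, 0 ≤ p₀ i) (hp₀sum : ∑ i, p₀ i = 1)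
    (γ₀ : Fin k₀ → ℝ) (hγ₀ : ∀ i, γ₀ i ∈ Γs)
    (D₀ : Set ℝ) (hD₀c : IsCompact D₀) (hD₀s : D₀ ⊆ Γs)
    (hD₀i : ∀ i, γ₀ i ∈ interior D₀)
    -- condition A3
    (hA3 : IntegrableOn (fun y => (∑ i, p₀ i * φ y (γ₀ i)) *
        |Real.log (sSup ((fun γ => φ y γ) '' D₀)) -
          Real.log (sInf ((fun γ => φ y γ) '' D₀))|) 𝒴) :
    ∀ ε : ℝ, 0 < ε → ∃ δ : ℝ, 0 < δ ∧
      ∀ (p : Fin k₀ → ℝ) (γ : Fin k₀ → ℝ),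
        (∀ i, 0 ≤ p i) → (∑ i, p i) = 1 →
        (∀ i, |p i - p₀ i| ≤ δ) → (∀ i, |γ i - γ₀ i| ≤ δ) →
        (∀ i, γ i ∈ D₀) →
        (∫ y in 𝒴, (∑ i, p₀ i * φ y (γ₀ i)) *
          Real.log ((∑ i, p₀ i * φ y (γ₀ i)) /
            (∑ i, p i * φ y (γ i)))) < ε :=
  stmt_16_general 𝒴 h𝒴 Γs k₀ φ hφpos hφdens hA1 p₀ hp₀nn hp₀sum γ₀ D₀ hD₀c hD₀s hD₀i hA3
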